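/- arXiv:0704.1403 — 5 statements merged into one kernel-verified Lean document; each statement's English description precedes it below -/
import Mathlib

section
/- Let (𝔥,𝔞,Π_𝔞) be a V-algebra and E = Ê + [P,·] an adapted derivation of 𝔥 of degree k. Then for every n ≥ 2, every 1 ≤ i ≤ n−1 and all homogeneous x_1,…,x_n ∈ 𝔞, the higher derived brackets are graded symmetric: D_E^n(x_1⊗…⊗x_i⊗x_{i+1}⊗…⊗x_n) = (−1)^{|x_i||x_{i+1}|} D_E^n(x_1⊗…⊗x_{i+1}⊗x_i⊗…⊗x_n). -/
open scoped BigOperators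
open scoped Classical

/-- A ℤ-graded Lie algebra over ℝ: a graded vector space with a degree-0 bracket
satisfying graded skew-symmetry and the graded Jacobi identity. -/
structure GLA (H : Type) [AddCommGroup H] [Module ℝ H] where
  deg : ℤ → Submodule ℝ H
  isInternal : DirectSum.IsInternal deg
  brk : H →ₗ[ℝ] H →ₗ[ℝ] H
  brk_deg : ∀ (i j : ℤ), ∀ x ∈ deg i, ∀ y ∈ deg j, brk x y ∈ deg (i + j)
  skew : ∀ (i j : ℤ), ∀ x ∈ deg i, ∀ y ∈ deg j, brk x y = -(((-1 : ℝ) ^ (i * j)) • brk y x)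
  jacobi : ∀ (i j : ℤ), ∀ x ∈ deg i, ∀ y ∈ deg j, ∀ z : H,
    brk x (brk y z) = brk (brk x y) z + ((-1 : ℝ) ^ (i * j)) • brk y (brk x z)

/-- A V-algebra: a graded Lie algebra with an abelian graded subalgebra 𝔞 (the range of
the degree-0 projection `proj`) such that `proj` satisfies the derivation-like identity. -/
structure VAlg (H : Type) [AddCommGroup H] [Module ℝ H] extends GLA H where
  proj : H →ₗ[ℝ] H
  proj_idem : ∀ x : H, proj (proj x) = proj x
  proj_deg : ∀ (i : ℤ), ∀ x ∈ deg i, proj x ∈ deg i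
  abelian : ∀ x y : H, brk (proj x) (proj y) = 0
  proj_brk : ∀ x y : H, proj (brk x y) = proj (brk (proj x) y) + proj (brk x (proj y))

variable {H : Type} [AddCommGroup H] [Module ℝ H]

/-- A derivation of degree `k` of a graded Lie algebra. -/
def IsDer (G : GLA H) (k : ℤ) (E : H →ₗ[ℝ] H) : Prop :=
  (∀ (i : ℤ), ∀ x ∈ G.deg i, E x ∈ G.deg (i + k)) ∧
  (∀ (i : ℤ), ∀ x ∈ G.deg i, ∀ y : H,
    E (G.brk x y) = G.brk (E x) y + ((-1 : ℝ) ^ (k * i)) • G.brk x (E y))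

/-- Membership in the abelian subalgebra 𝔞 (the range of the projection). -/
def VAlg.inA (V : VAlg H) (x : H) : Prop := V.proj x = x

/-- Higher derived brackets of an adapted derivation with underlying map `E` and
inner-part element `P0`: `D⁰ = Π P0`, `Dⁿ(x₁,…,xₙ) = Π [[…[E x₁, x₂],…], xₙ]`. -/
noncomputable def VAlg.D (V : VAlg H) (E : H →ₗ[ℝ] H) (P0 : H) : (n : ℕ) → (Fin n → H) → H
  | 0, _ => V.proj P0
  | (n+1), x =>
      V.proj (List.foldl (fun z a => V.brk z a) (E (x 0)) (List.ofFn fun i : Fin n => x i.succ))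

/-- The Koszul sign of a permutation acting on homogeneous elements of degrees `d`. -/
noncomputable def koszul {n : ℕ} (σ : Equiv.Perm (Fin n)) (d : Fin n → ℤ) : ℝ :=
  ∏ p ∈ Finset.univ.filter (fun p : Fin n × Fin n => p.1 < p.2 ∧ σ p.2 < σ p.1),
    (-1 : ℝ) ^ (d (σ p.1) * d (σ p.2))

/-- The (r, n-r)-shuffles inside the symmetric group on `Fin n`. -/
noncomputable def shuffles (n r : ℕ) : Finset (Equiv.Perm (Fin n)) :=
  Finset.univ.filter fun σ => ∀ i j : Fin n, i < j → ((j : ℕ) < r ∨ r ≤ (i : ℕ)) → σ i < σ j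

/-- The Jacobiators of a family of maps `Dm : (n : ℕ) → (Fin n → H) → H`, evaluated at a
tuple `x` of homogeneous elements with degrees `d`. -/
noncomputable def Jac (Dm : (n : ℕ) → (Fin n → H) → H) (n : ℕ) (d : Fin n → ℤ)
    (x : Fin n → H) : H :=
  ∑ r : Fin (n + 1), ∑ σ ∈ shuffles n r.1,
    koszul σ d •
      Dm (n - r.1 + 1)
        (Fin.cons
          (Dm r.1 fun i => x (σ (Fin.castLE (Nat.lt_succ_iff.mp r.isLt) i)))
          (fun i : Fin (n - r.1) =>
            x (σ (Fin.cast (Nat.add_sub_cancel' (Nat.lt_succ_iff.mp r.isLt)) (Fin.natAdd r.1 i)))))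

/-- Higher derived brackets on lists (`n ≥ 1` arguments given as head and tail of a list). -/
noncomputable def VAlg.Dlist (V : VAlg H) (E : H →ₗ[ℝ] H) (P0 : H) : List H → H
  | [] => V.proj P0
  | z :: l => V.proj (List.foldl (fun w a => V.brk w a) (E z) l)

/-!
Since `𝔞` is abelian, `[a, b] = 0` for `a, b ∈ 𝔞`. The graded Jacobi identity then gives
`[[w, a], b] = ±[a, [w, b]]`, and skew-symmetry turns this into `(-1)^(pq) [[w, b], a]`; in the
same way the derivation rule gives `[E a, b] = ±[a, E b] = (-1)^(pq) [E b, a]`. Either way the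
swap of adjacent arguments pulls out the sign, which then passes through the remaining brackets.
-/

lemma neg_one_zpow_two_mul_add (m n : ℤ) : (-1 : ℝ) ^ (2 * m + n) = (-1 : ℝ) ^ n := by
  rw [zpow_add₀ (by norm_num), zpow_mul]
  norm_num

namespace GLA

variable (G : GLA H)

lemma linearMap_ext {M : Type*} [AddCommGroup M] [Module ℝ M] {f g : H →ₗ[ℝ] M}
    (h : ∀ i, ∀ x ∈ G.deg i, f x = g x) : f = g := by
  refine LinearMap.ext_on (s := ⋃ i, (G.deg i : Set H)) ?_ ?_
  · rw [← Submodule.iSup_eq_span, G.isInternal.submodule_iSup_eq_top]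
  · intro x hx
    obtain ⟨i, hi⟩ := Set.mem_iUnion.mp hx
    exact h i x hi

lemma isDer_brk {k : ℤ} {P : H} (hP : P ∈ G.deg k) : IsDer G k (G.brk P) :=
  ⟨fun i x hx => add_comm i k ▸ G.brk_deg k i P hP x hx,
    fun i x hx y => G.jacobi k i P hP x hx y⟩

variable {a b : H} {p q : ℤ}

lemma brk_brk_comm_of_brk_eq_zero (ha : a ∈ G.deg p) (hb : b ∈ G.deg q)
    (hab : G.brk a b = 0) (w : H) :
    G.brk (G.brk w a) b = (-1 : ℝ) ^ (p * q) • G.brk (G.brk w b) a := by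
  suffices h :
      G.brk.flip b ∘ₗ G.brk.flip a = (-1 : ℝ) ^ (p * q) • (G.brk.flip a ∘ₗ G.brk.flip b) from LinearMap.congr_fun h w
  refine G.linearMap_ext fun i x hx => ?_
  have hjac := G.jacobi i p x hx a ha b
  rw [hab, map_zero, eq_comm, ← eq_neg_iff_add_eq_zero] at hjac
  simp only [LinearMap.comp_apply, LinearMap.flip_apply, LinearMap.smul_apply]
  rw [hjac, G.skew p (i + q) a ha _ (G.brk_deg i q x hx b hb), smul_neg, neg_neg, smul_smul,
    ← zpow_add₀ (by norm_num), show i * p + p * (i + q) = 2 * (i * p) + p * q by ring,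
    neg_one_zpow_two_mul_add]

lemma foldl_brk_smul (c : ℝ) (w : H) (l : List H) :
    List.foldl (fun z x => G.brk z x) (c • w) l =
      c • List.foldl (fun z x => G.brk z x) w l := by
  induction l generalizing w with
  | nil => rfl
  | cons x l ih => simp only [List.foldl_cons, map_smul, LinearMap.smul_apply, ih]

end GLA

namespace IsDer

variable {G : GLA H} {k : ℤ} {E : H →ₗ[ℝ] H}

lemma add {F : H →ₗ[ℝ] H} (hE : IsDer G k E) (hF : IsDer G k F) : IsDer G k (E + F) := by
  refine ⟨fun i x hx => add_mem (hE.1 i x hx) (hF.1 i x hx), fun i x hx y => ?_⟩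
  simp only [LinearMap.add_apply, map_add, smul_add, hE.2 i x hx y, hF.2 i x hx y]
  abel

lemma brk_comm_of_brk_eq_zero {a b : H} {p q : ℤ} (hE : IsDer G k E)
    (ha : a ∈ G.deg p) (hb : b ∈ G.deg q) (hab : G.brk a b = 0) :
    G.brk (E a) b = (-1 : ℝ) ^ (p * q) • G.brk (E b) a := by
  have hder := hE.2 p a ha b
  rw [hab, map_zero, eq_comm, ← eq_neg_iff_add_eq_zero] at hder
  rw [hder, G.skew p (q + k) a ha (E b) (hE.1 q b hb), smul_neg, neg_neg, smul_smul,
    ← zpow_add₀ (by norm_num), show k * p + p * (q + k) = 2 * (p * k) + p * q by ring,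
    neg_one_zpow_two_mul_add]

end IsDer

lemma VAlg.brk_eq_zero_of_inA (V : VAlg H) {a b : H} (ha : V.inA a) (hb : V.inA b) :
    V.brk a b = 0 := by
  rw [← ha, ← hb]
  exact V.abelian a b

theorem higher_derived_brackets_graded_symmetric_general
    (H : Type) [AddCommGroup H] [Module ℝ H] (V : VAlg H)
    (k : ℤ) (Ehat : H →ₗ[ℝ] H) (P : H)
    (hE : IsDer V.toGLA k Ehat)
    (hP : P ∈ V.deg k)
    (l₁ l₂ : List H) (a b : H) (p q : ℤ)
    (ha : V.inA a) (hadeg : a ∈ V.deg p)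
    (hb : V.inA b) (hbdeg : b ∈ V.deg q) :
    V.Dlist (Ehat + V.brk P) P (l₁ ++ a :: b :: l₂)
      = ((-1 : ℝ) ^ (p * q)) • V.Dlist (Ehat + V.brk P) P (l₁ ++ b :: a :: l₂) := by
  have hab := V.brk_eq_zero_of_inA ha hb
  have hEP : IsDer V.toGLA k (Ehat + V.brk P) := hE.add (V.isDer_brk hP)
  cases l₁ with
  | nil =>
    simp only [List.nil_append, VAlg.Dlist, List.foldl_cons]
    rw [hEP.brk_comm_of_brk_eq_zero hadeg hbdeg hab, GLA.foldl_brk_smul, map_smul]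
  | cons z l₁ =>
    simp only [List.cons_append, VAlg.Dlist, List.foldl_append, List.foldl_cons]
    rw [V.brk_brk_comm_of_brk_eq_zero hadeg hbdeg hab, GLA.foldl_brk_smul, map_smul]

/-- For a V-algebra `(𝔥,𝔞,Π)` and an adapted derivation `E = Ê + [P,·]` of
degree `k`, the higher derived brackets are graded symmetric: interchanging two adjacent
homogeneous arguments `a, b ∈ 𝔞` of degrees `p, q` produces the sign `(-1)^(p*q)`.
(The list encoding `l₁ ++ a :: b :: l₂` realises an arbitrary `n ≥ 2` and `1 ≤ i ≤ n-1`.) -/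
theorem higher_derived_brackets_graded_symmetric
    (H : Type) [AddCommGroup H] [Module ℝ H] (V : VAlg H)
    (k : ℤ) (Ehat : H →ₗ[ℝ] H) (P : H)
    (hE : IsDer V.toGLA k Ehat)
    (hAdapt : ∀ x : H, V.proj (Ehat (V.proj x)) = V.proj (Ehat x))
    (hP : P ∈ V.deg k)
    (l₁ l₂ : List H) (a b : H) (p q : ℤ)
    (hl₁ : ∀ z ∈ l₁, V.inA z ∧ ∃ i, z ∈ V.deg i)
    (hl₂ : ∀ z ∈ l₂, V.inA z ∧ ∃ i, z ∈ V.deg i)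
    (ha : V.inA a) (hadeg : a ∈ V.deg p)
    (hb : V.inA b) (hbdeg : b ∈ V.deg q) :
    V.Dlist (Ehat + V.brk P) P (l₁ ++ a :: b :: l₂)
      = ((-1 : ℝ) ^ (p * q)) • V.Dlist (Ehat + V.brk P) P (l₁ ++ b :: a :: l₂) :=
  higher_derived_brackets_graded_symmetric_general H V k Ehat P hE hP l₁ l₂ a b p q ha hadeg hb
    hbdeg
end

section
/- Let (𝔥,𝔞,Π_𝔞) be a V-algebra and E = Ê + [P,·] an adapted derivation of odd degree with P ∈ 𝔞. Then for all n ≥ 0 the Jacobiators of the family of higher derived brackets of E decompose as J_E^n = J_Ê^n + D^n_{[Ê(P),·]}, where D^n_{[Ê(P),·]} denotes the higher derived brackets of the inner derivation [Ê(P),·] (an adapted derivation with Ê-part 0 and element Ê(P)). -/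
open scoped BigOperators
open scoped Classical

variable {H : Type} [AddCommGroup H] [Module ℝ H]

/-!
Write `E = Ê + [P,·]`. Since `𝔞` is abelian and `P ∈ 𝔞`, `E` and `Ê` agree on `𝔞`. Every
derived bracket takes values in `𝔞`, so in each Jacobiator summand with `r ≥ 1` both the
inner and the outer bracket start by applying the derivation to an element of `𝔞`: these
summands are the same for `E` and `Ê`. Only the `r = 0` summand `D^{n+1}(D⁰, x₁, …, xₙ)`
differs. For `Ê` it vanishes, as `D⁰_Ê = Π 0 = 0`; for `E` it is
`Π[…[E P, x₁]…, xₙ] = Π[…[Ê P, x₁]…, xₙ] = D^n_{[Ê P,·]}(x)`, because `[P, P] = 0`.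
-/

theorem List.foldl_bilin_zero {R M N : Type*} [CommSemiring R] [AddCommMonoid M]
    [AddCommMonoid N] [Module R M] [Module R N] (B : M →ₗ[R] N →ₗ[R] M) (l : List N) :
    l.foldl (fun z a => B z a) 0 = 0 := by
  induction l with
  | nil => rfl
  | cons a l ih => simpa only [List.foldl_cons, map_zero, LinearMap.zero_apply] using ih

theorem shuffles_zero (n : ℕ) : shuffles n 0 = {1} := by
  ext σ
  simp only [shuffles, Finset.mem_filter, Finset.mem_univ, true_and, Finset.mem_singleton]
  constructor
  · intro hσ
    have hmono : StrictMono σ := fun i j hij => hσ i j hij (Or.inr (Nat.zero_le _))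
    have hrange : Set.range σ = Set.range id := by
      rw [σ.surjective.range_eq, Set.range_id]
    exact Equiv.ext (congrFun ((hmono.range_inj strictMono_id).mp hrange))
  · rintro rfl i j hij _
    exact hij

theorem koszul_one {n : ℕ} (d : Fin n → ℤ) : koszul (1 : Equiv.Perm (Fin n)) d = 1 := by
  rw [koszul, Finset.filter_false_of_mem, Finset.prod_empty]
  rintro p - ⟨hlt, hgt⟩
  exact lt_asymm hlt hgt

theorem sum_shuffles_zero_eq (Dm : (n : ℕ) → (Fin n → H) → H) (n : ℕ) (d : Fin n → ℤ)
    (x : Fin n → H) :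
    (∑ σ ∈ shuffles n 0, koszul σ d •
      Dm (n - 0 + 1)
        (Fin.cons (Dm 0 fun i => x (σ (Fin.castLE (Nat.zero_le n) i)))
          (fun i : Fin (n - 0) =>
            x (σ (Fin.cast (Nat.add_sub_cancel' (Nat.zero_le n)) (Fin.natAdd 0 i))))))
      = Dm (n + 1) (Fin.cons (Dm 0 Fin.elim0) x) := by
  rw [shuffles_zero, Finset.sum_singleton, koszul_one, one_smul]
  congr 2
  · exact congrArg (Dm 0) (Subsingleton.elim _ _)
  · funext i
    simp

theorem Jac_eq_add_of_agree (Dm Dm' : (n : ℕ) → (Fin n → H) → H) (p : H → Prop)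
    (hagree : ∀ m (y : Fin (m + 1) → H), p (y 0) → Dm (m + 1) y = Dm' (m + 1) y)
    (hp : ∀ m y, p (Dm' m y)) (n : ℕ) (d : Fin n → ℤ) (x : Fin n → H) (hx : ∀ i, p (x i)) :
    Jac Dm n d x = Jac Dm' n d x
      + (Dm (n + 1) (Fin.cons (Dm 0 Fin.elim0) x)
        - Dm' (n + 1) (Fin.cons (Dm' 0 Fin.elim0) x)) := by
  unfold Jac
  simp only [Fin.sum_univ_succ, Fin.val_zero, Fin.val_succ]
  rw [sum_shuffles_zero_eq, sum_shuffles_zero_eq, add_comm (Dm' _ _), add_add_sub_cancel, add_comm (Dm _ _)]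
  refine congrArg (· + _) (Finset.sum_congr rfl fun r _ => Finset.sum_congr rfl fun σ _ => ?_)
  rw [hagree (r : ℕ) _ (hx _)]
  exact congrArg _ (hagree _ _ (hp _ _))

namespace VAlg

variable (V : VAlg H)

theorem brk_eq_zero_of_inA_s1 {x y : H} (hx : V.inA x) (hy : V.inA y) : V.brk x y = 0 := by
  rw [← hx, ← hy]
  exact V.abelian x y

theorem inA_D (E : H →ₗ[ℝ] H) (P0 : H) (n : ℕ) (y : Fin n → H) : V.inA (V.D E P0 n y) := by
  cases n <;> exact V.proj_idem _

theorem D_succ_congr_head {E E' : H →ₗ[ℝ] H} (P0 P0' : H) {m : ℕ} {y : Fin (m + 1) → H}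
    (h : E (y 0) = E' (y 0)) : V.D E P0 (m + 1) y = V.D E' P0' (m + 1) y := by
  simp only [VAlg.D, h]

theorem D_succ_eq_zero {E : H →ₗ[ℝ] H} (P0 : H) {m : ℕ} {y : Fin (m + 1) → H}
    (h : E (y 0) = 0) : V.D E P0 (m + 1) y = 0 := by
  simp only [VAlg.D, h, List.foldl_bilin_zero, map_zero]

theorem D_add_brk_succ_of_inA {Ehat : H →ₗ[ℝ] H} {P : H} (hP : V.inA P) (P0 P0' : H) {m : ℕ}
    {y : Fin (m + 1) → H} (hy : V.inA (y 0)) :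
    V.D (Ehat + V.brk P) P0 (m + 1) y = V.D Ehat P0' (m + 1) y :=
  V.D_succ_congr_head P0 P0' (by rw [LinearMap.add_apply, V.brk_eq_zero_of_inA_s1 hP hy, add_zero])

theorem D_add_brk_succ_cons {Ehat : H →ₗ[ℝ] H} {P : H} (hP : V.inA P) (m : ℕ) (y : Fin m → H) :
    V.D (Ehat + V.brk P) P (m + 1) (Fin.cons P y) = V.D (V.brk (Ehat P)) (Ehat P) m y := by
  have hEP : (Ehat + V.brk P) P = Ehat P := by
    rw [LinearMap.add_apply, V.brk_eq_zero_of_inA_s1 hP hP, add_zero]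
  cases m with
  | zero => simp [VAlg.D, hEP]
  | succ m => simp only [VAlg.D, Fin.cons_zero, Fin.cons_succ, hEP, List.ofFn_succ, List.foldl_cons]

end VAlg

theorem jacobiator_decomposition_general
    (H : Type) [AddCommGroup H] [Module ℝ H] (V : VAlg H)
    (Ehat : H →ₗ[ℝ] H) (P : H)
    (hPa : V.inA P)
    (n : ℕ) (d : Fin n → ℤ) (x : Fin n → H)
    (hxa : ∀ i, V.inA (x i)) :
    Jac (V.D (Ehat + V.brk P) P) n d x
      = Jac (V.D Ehat 0) n d x + V.D (V.brk (Ehat P)) (Ehat P) n x := by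
  rw [Jac_eq_add_of_agree _ _ V.inA (fun _ _ => V.D_add_brk_succ_of_inA hPa P 0) (V.inA_D Ehat 0)
    n d x hxa]
  have hD0 : V.D (Ehat + V.brk P) P 0 Fin.elim0 = P := hPa
  have hD0hat : V.D Ehat 0 (n + 1) (Fin.cons (V.D Ehat 0 0 Fin.elim0) x) = 0 :=
    V.D_succ_eq_zero 0 (by simp [VAlg.D])
  rw [hD0, V.D_add_brk_succ_cons hPa, hD0hat, sub_zero]

/-- Let `(𝔥,𝔞,Π)` be a V-algebra and `E = Ê + [P,·]` an adapted derivation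
of odd degree `k` with `P ∈ 𝔞` (and `P` homogeneous of degree `k`).  Then for all `n ≥ 0`
and all tuples of homogeneous elements of `𝔞`, the Jacobiators of the higher derived
brackets of `E` decompose as `J_E^n = J_Ê^n + D^n_{[Ê(P),·]}`, where `[Ê(P),·]` is the inner
derivation with `Ê`-part `0` and element `Ê(P)`, and `Ê` has element `0`. -/
theorem jacobiator_decomposition
    (H : Type) [AddCommGroup H] [Module ℝ H] (V : VAlg H)
    (k : ℤ) (hk : Odd k) (Ehat : H →ₗ[ℝ] H) (P : H)
    (hE : IsDer V.toGLA k Ehat)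
    (hAdapt : ∀ x : H, V.proj (Ehat (V.proj x)) = V.proj (Ehat x))
    (hPdeg : P ∈ V.deg k) (hPa : V.inA P)
    (n : ℕ) (d : Fin n → ℤ) (x : Fin n → H)
    (hxdeg : ∀ i, x i ∈ V.deg (d i)) (hxa : ∀ i, V.inA (x i)) :
    Jac (V.D (Ehat + V.brk P) P) n d x
      = Jac (V.D Ehat 0) n d x + V.D (V.brk (Ehat P)) (Ehat P) n x :=
  jacobiator_decomposition_general H V Ehat P hPa n d x hxa
end

section
/- Let Φ: (𝔥₁,𝔞₁,Π_{𝔞₁}) → (𝔥₂,𝔞₂,Π_{𝔞₂}) be a morphism of V-algebras, i.e. a morphism of graded Lie algebras with Π_{𝔞₂}∘Φ = Φ∘Π_{𝔞₁}. Let E_i = Ê_i + [P_i,·] be adapted derivations of 𝔥_i (i = 1,2) which are Φ-related, i.e. E₂∘Φ = Φ∘E₁ and P₂ − Φ(P₁) ∈ Ker Π_{𝔞₂}. Then for all n ≥ 1 and all x_1,…,x_n ∈ 𝔞₁ one has D^n_{E₂}(Φ(x_1)⊗…⊗Φ(x_n)) = Φ(D^n_{E₁}(x_1⊗…⊗x_n)),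 and moreover D^0_{E₂} = Φ(D^0_{E₁}). In particular, if E₁ and E₂ are Maurer–Cartan elements (degree 1, E_i∘E_i = 0), then Φ restricts to a linear morphism of the induced L∞-algebras 𝔞₁ → 𝔞₂. -/
open scoped BigOperators
open scoped Classical

variable {H : Type} [AddCommGroup H] [Module ℝ H]

/-! Each ingredient of a higher derived bracket (the derivation, the bracket and the projection)
commutes with `Φ`, so `Φ` can be pulled out of the iterated bracket one bracket at a time.
For `D⁰` one only needs `Π₂ P₂ = Π₂ (Φ P₁)`, which is the condition `P₂ − Φ P₁ ∈ Ker Π₂`. -/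

theorem GLA.foldl_brk_map {H₁ H₂ : Type} [AddCommGroup H₁] [Module ℝ H₁] [AddCommGroup H₂]
    [Module ℝ H₂] {G₁ : GLA H₁} {G₂ : GLA H₂} {Φ : H₁ →ₗ[ℝ] H₂}
    (hΦbrk : ∀ x y : H₁, Φ (G₁.brk x y) = G₂.brk (Φ x) (Φ y)) (z : H₁) (l : List H₁) :
    List.foldl (fun z a => G₂.brk z a) (Φ z) (l.map Φ)
      = Φ (List.foldl (fun z a => G₁.brk z a) z l) := by
  rw [List.foldl_map]
  exact List.foldl_hom Φ fun x y => (hΦbrk x y).symm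

theorem VAlg.D_succ_map {H₁ H₂ : Type} [AddCommGroup H₁] [Module ℝ H₁] [AddCommGroup H₂]
    [Module ℝ H₂] {V₁ : VAlg H₁} {V₂ : VAlg H₂} {Φ : H₁ →ₗ[ℝ] H₂}
    (hΦbrk : ∀ x y : H₁, Φ (V₁.brk x y) = V₂.brk (Φ x) (Φ y))
    (hΦproj : ∀ x : H₁, V₂.proj (Φ x) = Φ (V₁.proj x))
    {E₁ : H₁ →ₗ[ℝ] H₁} {E₂ : H₂ →ₗ[ℝ] H₂} (hE : ∀ x : H₁, E₂ (Φ x) = Φ (E₁ x))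
    (P₁ : H₁) (P₂ : H₂) (n : ℕ) (x : Fin (n + 1) → H₁) :
    V₂.D E₂ P₂ (n + 1) (fun i => Φ (x i)) = Φ (V₁.D E₁ P₁ (n + 1) x) := by
  have hofFn : (List.ofFn fun i : Fin n => Φ (x i.succ))
      = (List.ofFn fun i : Fin n => x i.succ).map Φ := List.map_ofFn.symm
  simp only [VAlg.D]
  rw [hofFn, hE, GLA.foldl_brk_map hΦbrk, hΦproj]

theorem v_morphism_intertwines_derived_brackets_general
    (H₁ H₂ : Type) [AddCommGroup H₁] [Module ℝ H₁] [AddCommGroup H₂] [Module ℝ H₂]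
    (V₁ : VAlg H₁) (V₂ : VAlg H₂)
    (Φ : H₁ →ₗ[ℝ] H₂)
    (hΦbrk : ∀ x y : H₁, Φ (V₁.brk x y) = V₂.brk (Φ x) (Φ y))
    (hΦproj : ∀ x : H₁, V₂.proj (Φ x) = Φ (V₁.proj x))
    (Ehat₁ : H₁ →ₗ[ℝ] H₁) (P₁ : H₁) (Ehat₂ : H₂ →ₗ[ℝ] H₂) (P₂ : H₂)
    (hRelMap : (Ehat₂ + V₂.brk P₂) ∘ₗ Φ = Φ ∘ₗ (Ehat₁ + V₁.brk P₁))
    (hRelP : V₂.proj (P₂ - Φ P₁) = 0) :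
    (∀ (n : ℕ), 1 ≤ n → ∀ x : Fin n → H₁, (∀ i, V₁.inA (x i)) →
        V₂.D (Ehat₂ + V₂.brk P₂) P₂ n (fun i => Φ (x i))
          = Φ (V₁.D (Ehat₁ + V₁.brk P₁) P₁ n x)) ∧
      V₂.proj P₂ = Φ (V₁.proj P₁) := by
  refine ⟨fun n hn x _ => ?_, ?_⟩
  · obtain ⟨m, rfl⟩ : ∃ m, n = m + 1 := ⟨n - 1, by omega⟩
    exact VAlg.D_succ_map hΦbrk hΦproj (LinearMap.congr_fun hRelMap) P₁ P₂ m x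
  · rw [← hΦproj, ← sub_eq_zero, ← map_sub]
    exact hRelP

/-- Let `Φ : (𝔥₁,𝔞₁,Π₁) → (𝔥₂,𝔞₂,Π₂)` be a morphism of V-algebras and let
`E_i = Ê_i + [P_i,·]` be adapted derivations (of a common degree `k`) which are Φ-related,
i.e. `E₂∘Φ = Φ∘E₁` and `P₂ − Φ(P₁) ∈ Ker Π₂`.  Then for all `n ≥ 1` and all
`x₁,…,xₙ ∈ 𝔞₁` one has `D^n_{E₂}(Φ x₁,…,Φ xₙ) = Φ (D^n_{E₁}(x₁,…,xₙ))`, and moreover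
`D^0_{E₂} = Φ (D^0_{E₁})`; in particular (for Maurer–Cartan `E₁, E₂`) `Φ` restricts to a
linear morphism of the induced L∞-algebras `𝔞₁ → 𝔞₂`. -/
theorem v_morphism_intertwines_derived_brackets
    (H₁ H₂ : Type) [AddCommGroup H₁] [Module ℝ H₁] [AddCommGroup H₂] [Module ℝ H₂]
    (V₁ : VAlg H₁) (V₂ : VAlg H₂)
    (Φ : H₁ →ₗ[ℝ] H₂)
    (hΦdeg : ∀ (i : ℤ), ∀ x ∈ V₁.deg i, Φ x ∈ V₂.deg i)
    (hΦbrk : ∀ x y : H₁, Φ (V₁.brk x y) = V₂.brk (Φ x) (Φ y))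
    (hΦproj : ∀ x : H₁, V₂.proj (Φ x) = Φ (V₁.proj x))
    (k : ℤ) (Ehat₁ : H₁ →ₗ[ℝ] H₁) (P₁ : H₁) (Ehat₂ : H₂ →ₗ[ℝ] H₂) (P₂ : H₂)
    (hE₁ : IsDer V₁.toGLA k Ehat₁)
    (hAdapt₁ : ∀ x : H₁, V₁.proj (Ehat₁ (V₁.proj x)) = V₁.proj (Ehat₁ x))
    (hP₁deg : P₁ ∈ V₁.deg k)
    (hE₂ : IsDer V₂.toGLA k Ehat₂)
    (hAdapt₂ : ∀ x : H₂, V₂.proj (Ehat₂ (V₂.proj x)) = V₂.proj (Ehat₂ x))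
    (hP₂deg : P₂ ∈ V₂.deg k)
    (hRelMap : (Ehat₂ + V₂.brk P₂) ∘ₗ Φ = Φ ∘ₗ (Ehat₁ + V₁.brk P₁))
    (hRelP : V₂.proj (P₂ - Φ P₁) = 0) :
    (∀ (n : ℕ), 1 ≤ n → ∀ x : Fin n → H₁, (∀ i, V₁.inA (x i)) →
        V₂.D (Ehat₂ + V₂.brk P₂) P₂ n (fun i => Φ (x i))
          = Φ (V₁.D (Ehat₁ + V₁.brk P₁) P₁ n x)) ∧
      V₂.proj P₂ = Φ (V₁.proj P₁) :=
  v_morphism_intertwines_derived_brackets_general H₁ H₂ V₁ V₂ Φ hΦbrk hΦproj Ehat₁ P₁ Ehat₂ P₂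
    hRelMap hRelP
end

section
/- Let (𝔥,𝔞,Π_𝔞) be a V-algebra and m_t a degree-0 derivation of 𝔥[[t]] with Π_{𝔞[[t]]}∘m_t∘Π_{𝔞[[t]]} = Π_{𝔞[[t]]}∘m_t. Then the system of equations d/dt U^n(t)(x_1⊗…⊗x_n) = Σ_{σ∈Σ_n} sign(σ) Σ_{k≥1} Σ_{l_1+⋯+l_k=n} (1/(k!·l_1!⋯l_k!)) D^k_{m_t}( U^{l_1}(t)(x_{σ(1)}⊗…⊗x_{σ(l_1)}) ⊗ … ⊗ U^{l_k}(t)(x_{σ(l_1+⋯+l_{k-1}+1)}⊗…⊗x_{σ(n)}) ), for all n ≥ 1 and x_i ∈ 𝔞[[t]], with initial conditions U^1(0) = id and U^n(0) = 0 for n ≠ 1, has a unique solution by formal power series in t among families {U^n(t): S^n(𝔞[[t]]) → 𝔞[[t]]}_{n≥0}; moreover this solution has U^0(t) = 0. -/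
open scoped BigOperators
open scoped Classical

variable {H : Type} [AddCommGroup H] [Module ℝ H]

/-- A tuple of homogeneous elements of the abelian subalgebra `𝔞`, of degrees `d`. -/
def HomA (V : VAlg H) {n : ℕ} (d : Fin n → ℤ) (x : Fin n → H) : Prop :=
  (∀ i, x i ∈ V.deg (d i)) ∧ (∀ i, V.inA (x i))

/-- The `t^r`-coefficient of the right-hand side of the flow equation
`d/dt Uⁿ = Σ_σ Σ_{k,l₁+⋯+l_k=n} (sign(σ)/(k!·l₁!⋯l_k!)) D^k_{m_t}(U^{l₁}(…)⊗…⊗U^{l_k}(…))`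
in the formal setting, where `m` and `U` are given by their `t`-coefficients. -/
noncomputable def formalEqnRHS (V : VAlg H) (m : ℕ → H →ₗ[ℝ] H)
    (U : ℕ → (n : ℕ) → (Fin n → ℤ) → (Fin n → H) → H)
    (r n : ℕ) (d : Fin n → ℤ) (x : Fin n → H) : H :=
  ∑ σ : Equiv.Perm (Fin n), ∑ c : Composition n,
    ∑ p ∈ Finset.Nat.antidiagonalTuple (c.length + 1) r,
      (koszul σ d /
          ((Nat.factorial c.length : ℝ) *
            ∏ j : Fin c.length, (Nat.factorial (c.blocksFun j) : ℝ))) •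
        V.D (m (p 0)) 0 c.length
          (fun j => U (p j.succ) (c.blocksFun j)
            (fun i => d (σ (c.embedding j i))) (fun i => x (σ (c.embedding j i))))

/-- A formal solution of the flow equation for the coalgebra morphism `U(t)`:
`U⁰ = 0`, values in `𝔞`, the coefficientwise flow equation for all `n ≥ 1`, and the
initial conditions `U¹(0) = id`, `Uⁿ(0) = 0` for `n ≠ 1`. -/
def IsFormalSol (V : VAlg H) (m : ℕ → H →ₗ[ℝ] H)
    (U : ℕ → (n : ℕ) → (Fin n → ℤ) → (Fin n → H) → H) : Prop :=
  (∀ (r : ℕ) (d : Fin 0 → ℤ) (x : Fin 0 → H), U r 0 d x = 0) ∧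
  (∀ (r n : ℕ) (d : Fin n → ℤ) (x : Fin n → H), HomA V d x → V.inA (U r n d x)) ∧
  (∀ (n : ℕ), 1 ≤ n → ∀ (r : ℕ) (d : Fin n → ℤ) (x : Fin n → H), HomA V d x →
    ((r : ℝ) + 1) • U (r + 1) n d x = formalEqnRHS V m U r n d x) ∧
  (∀ (d : Fin 1 → ℤ) (x : Fin 1 → H), HomA V d x → U 0 1 d x = x 0) ∧
  (∀ (n : ℕ), n ≠ 1 → ∀ (d : Fin n → ℤ) (x : Fin n → H), HomA V d x → U 0 n d x = 0)

/-! Comparing coefficients of `tʳ`, the flow equation expresses `(r+1) • U_{r+1}` through the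
coefficients `U_p` with `p ≤ r` only, since the `t`-degrees entering a term of its right-hand
side add up to `r`. Together with the initial conditions it is therefore a recursion on `r`,
which both constructs the solution and forces any two solutions to agree. -/

def flowInit {α : Type*} [Zero α] : (n : ℕ) → (Fin n → ℤ) → (Fin n → α) → α
  | 1, _, x => x 0
  | _, _, _ => 0

theorem flowInit_of_ne_one {α : Type*} [Zero α] {n : ℕ} (hn : n ≠ 1) (d : Fin n → ℤ)
    (x : Fin n → α) : flowInit n d x = 0 := by
  match n, hn with
  | 0, _ => rfl
  | _ + 2, _ => rfl

section FlowSystem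

variable (V : VAlg H) (m : ℕ → H →ₗ[ℝ] H)
  {U U' : ℕ → (n : ℕ) → (Fin n → ℤ) → (Fin n → H) → H}

theorem VAlg.D_of_eq_zero (E : H →ₗ[ℝ] H) (P0 : H) {k : ℕ} (hk : k = 0) (x : Fin k → H) :
    V.D E P0 k x = V.proj P0 := by
  subst hk
  rfl

theorem VAlg.proj_D (E : H →ₗ[ℝ] H) (P0 : H) (n : ℕ) (x : Fin n → H) :
    V.proj (V.D E P0 n x) = V.D E P0 n x := by
  cases n <;> exact V.proj_idem _

theorem inA_formalEqnRHS (r n : ℕ) (d : Fin n → ℤ) (x : Fin n → H) :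
    V.inA (formalEqnRHS V m U r n d x) := by
  simp only [VAlg.inA, formalEqnRHS, map_sum, map_smul, VAlg.proj_D]

theorem formalEqnRHS_zero_arity (r : ℕ) (d : Fin 0 → ℤ) (x : Fin 0 → H) :
    formalEqnRHS V m U r 0 d x = 0 :=
  Finset.sum_eq_zero fun _ _ => Finset.sum_eq_zero fun c _ => Finset.sum_eq_zero fun _ _ => by
    rw [V.D_of_eq_zero _ _ (Nat.le_zero.mp c.length_le), map_zero, smul_zero]

theorem formalEqnRHS_congr {r n : ℕ} {d : Fin n → ℤ} {x : Fin n → H} (hx : HomA V d x)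
    (hUU' : ∀ p ≤ r, ∀ (k : ℕ) (e : Fin k → ℤ) (y : Fin k → H),
      HomA V e y → U p k e y = U' p k e y) :
    formalEqnRHS V m U r n d x = formalEqnRHS V m U' r n d x := by
  refine Finset.sum_congr rfl fun σ _ => Finset.sum_congr rfl fun c _ =>
    Finset.sum_congr rfl fun p hp => ?_
  have hp_le : ∀ j, p j ≤ r := fun j =>
    (Finset.Nat.mem_antidiagonalTuple.mp hp) ▸
      Finset.single_le_sum (fun _ _ => Nat.zero_le _) (Finset.mem_univ j)
  congr 2
  funext j
  exact hUU' _ (hp_le j.succ) _ _ _ ⟨fun _ => hx.1 _, fun _ => hx.2 _⟩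

/-- Coefficients of index `> r` are replaced by `0` before being fed to `formalEqnRHS V m _ r`,
so that the recursion visibly only calls earlier coefficients; by `formalEqnRHS_congr` this
changes nothing on `𝔞`. -/
noncomputable def flowSol : ℕ → (n : ℕ) → (Fin n → ℤ) → (Fin n → H) → H
  | 0 => flowInit
  | r + 1 => fun n d x =>
      ((r : ℝ) + 1)⁻¹ •
        formalEqnRHS V m (fun p => if p ≤ r then flowSol p else fun _ _ _ => 0) r n d x

theorem flowSol_zero : flowSol V m 0 = flowInit := flowSol.eq_1 V m

theorem flowSol_succ (r : ℕ) {n : ℕ} {d : Fin n → ℤ} {x : Fin n → H} (hx : HomA V d x) :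
    flowSol V m (r + 1) n d x = ((r : ℝ) + 1)⁻¹ • formalEqnRHS V m (flowSol V m) r n d x := by
  rw [flowSol.eq_2]
  exact congrArg _ (formalEqnRHS_congr V m hx fun p hp _ _ _ _ => by rw [if_pos hp])

theorem isFormalSol_flowSol : IsFormalSol V m (flowSol V m) := by
  have homA_nil : ∀ d x, HomA V (n := 0) d x := fun _ _ => ⟨finZeroElim, finZeroElim⟩
  refine ⟨fun r d x => ?_, fun r n d x hx => ?_, fun n _ r d x hx => ?_,
    fun _ _ _ => by rw [flowSol_zero]; rfl,
    fun n hn d x _ => by rw [flowSol_zero, flowInit_of_ne_one hn]⟩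
  · cases r with
    | zero => rw [flowSol_zero]; rfl
    | succ r => rw [flowSol_succ V m r (homA_nil d x), formalEqnRHS_zero_arity, smul_zero]
  · cases r with
    | zero =>
      rw [flowSol_zero]
      by_cases hn : n = 1
      · subst hn
        exact hx.2 0
      · rw [VAlg.inA, flowInit_of_ne_one hn, map_zero]
    | succ r =>
      rw [flowSol_succ V m r hx, VAlg.inA, map_smul, inA_formalEqnRHS]
  · rw [flowSol_succ V m r hx, smul_inv_smul₀ (by positivity)]

variable {V m}

theorem IsFormalSol.coeff_zero (hU : IsFormalSol V m U) {n : ℕ} {d : Fin n → ℤ}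
    {x : Fin n → H} (hx : HomA V d x) : U 0 n d x = flowInit n d x := by
  by_cases hn : n = 1
  · subst hn
    exact hU.2.2.2.1 d x hx
  · rw [hU.2.2.2.2 n hn d x hx, flowInit_of_ne_one hn]

theorem IsFormalSol.coeff_succ (hU : IsFormalSol V m U) (r : ℕ) {n : ℕ} {d : Fin n → ℤ}
    {x : Fin n → H} (hx : HomA V d x) :
    U (r + 1) n d x = ((r : ℝ) + 1)⁻¹ • formalEqnRHS V m U r n d x := by
  rcases Nat.eq_zero_or_pos n with rfl | hn
  · rw [hU.1, formalEqnRHS_zero_arity, smul_zero]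
  · rw [← hU.2.2.1 n hn r d x hx, inv_smul_smul₀ (by positivity)]

theorem IsFormalSol.eq (hU : IsFormalSol V m U) (hU' : IsFormalSol V m U') (r n : ℕ)
    (d : Fin n → ℤ) (x : Fin n → H) (hx : HomA V d x) : U r n d x = U' r n d x := by
  induction r using Nat.strong_induction_on generalizing n with
  | _ r ih =>
    cases r with
    | zero => rw [hU.coeff_zero hx, hU'.coeff_zero hx]
    | succ r =>
      rw [hU.coeff_succ r hx, hU'.coeff_succ r hx,
        formalEqnRHS_congr V m hx fun p hp => ih p (Nat.lt_succ_of_le hp)]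

end FlowSystem

theorem formal_flow_system_unique_solution_general
    (H : Type) [AddCommGroup H] [Module ℝ H] (V : VAlg H)
    (m : ℕ → H →ₗ[ℝ] H) :
    (∃ U, IsFormalSol V m U) ∧
    (∀ U U', IsFormalSol V m U → IsFormalSol V m U' →
      ∀ (r n : ℕ) (d : Fin n → ℤ) (x : Fin n → H), HomA V d x →
        U r n d x = U' r n d x) :=
  ⟨⟨flowSol V m, isFormalSol_flowSol V m⟩, fun _ _ hU hU' => hU.eq hU'⟩

/-- Let `(𝔥,𝔞,Π)` be a V-algebra and `m_t` a degree-0 derivation of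
`𝔥[[t]]` (coefficients `m_r`) with `Π∘m_t∘Π = Π∘m_t`.  Then the flow system for the
families `Uⁿ(t) : Sⁿ(𝔞[[t]]) → 𝔞[[t]]` with initial conditions `U¹(0) = id`, `Uⁿ(0) = 0`
(`n ≠ 1`) has a unique solution by formal power series in `t`, and that solution has
`U⁰(t) = 0`. -/
theorem formal_flow_system_unique_solution
    (H : Type) [AddCommGroup H] [Module ℝ H] (V : VAlg H)
    (m : ℕ → H →ₗ[ℝ] H)
    (hder : ∀ r : ℕ, IsDer V.toGLA 0 (m r))
    (hproj : ∀ (r : ℕ) (x : H), V.proj (m r (V.proj x)) = V.proj (m r x)) :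
    (∃ U, IsFormalSol V m U) ∧
    (∀ U U', IsFormalSol V m U → IsFormalSol V m U' →
      ∀ (r n : ℕ) (d : Fin n → ℤ) (x : Fin n → H), HomA V d x →
        U r n d x = U' r n d x) :=
  formal_flow_system_unique_solution_general H V m
end

section
/- Let (𝔥,𝔞,Π_𝔞) be a V-algebra and m_t, t ∈ [0,1], a family of degree-0 derivations of 𝔥 with Π_𝔞∘m_t∘Π_𝔞 = Π_𝔞∘m_t for all t. Assume the only solution of the Cauchy problem d/dt λ_t = Π_𝔞∘m_t∘λ_t, λ_0 = 0 is λ_t ≡ 0. Then any two families {U^n(t)}_{n≥1} and {Ũ^n(t)}_{n≥1} of maps S^n(𝔞) → 𝔞, both with U^0 = Ũ^0 = 0, both satisfying the system d/dt U^n(t)(x_1⊗…⊗x_n) = Σ_{σ∈Σ_n} sign(σ) Σ_{k≥1} Σ_{l_1+⋯+l_k=n} (1/(k!·l_1!⋯l_k!)) D^k_{m_t}( U^{l_1}(t)(x_{σ(1)}⊗…⊗x_{σ(l_1)}) ⊗ … ⊗ U^{l_k}(t)(x_{σ(l_1+⋯+l_{k-1}+1)}⊗…⊗x_{σ(n)})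 ) for all t ∈ [0,1], and with the same initial values at t = 0, coincide: U^n(t) = Ũ^n(t) for all n and all t ∈ [0,1]. -/
open scoped BigOperators
open scoped Classical

variable {H : Type} [AddCommGroup H] [Module ℝ H]

/-- The right-hand side `Σ_σ Σ_{k,l₁+⋯+l_k=n} (sign(σ)/(k!·l₁!⋯l_k!))
D^k_{m_t}(U^{l₁}(…)⊗…⊗U^{l_k}(…))` of the flow equation for the family `U`. -/
noncomputable def eqnRHS (V : VAlg H) (mt : H →ₗ[ℝ] H)
    (U : (n : ℕ) → (Fin n → ℤ) → (Fin n → H) → H)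
    (n : ℕ) (d : Fin n → ℤ) (x : Fin n → H) : H :=
  ∑ σ : Equiv.Perm (Fin n), ∑ c : Composition n,
    (koszul σ d /
        ((Nat.factorial c.length : ℝ) *
          ∏ j : Fin c.length, (Nat.factorial (c.blocksFun j) : ℝ))) •
      V.D mt 0 c.length
        (fun j => U (c.blocksFun j)
          (fun i => d (σ (c.embedding j i))) (fun i => x (σ (c.embedding j i))))

/-- An (analytic) solution on `[0,1]` of the flow system for the family
`Uⁿ(t) : Sⁿ(𝔞) → 𝔞`, with `U⁰ = 0` and values in `𝔞`. -/
def IsAnalyticSol {H : Type} [NormedAddCommGroup H] [NormedSpace ℝ H] (V : VAlg H)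
    (m : ℝ → H →ₗ[ℝ] H)
    (U : ℝ → (n : ℕ) → (Fin n → ℤ) → (Fin n → H) → H) : Prop :=
  (∀ (t : ℝ) (d : Fin 0 → ℤ) (x : Fin 0 → H), U t 0 d x = 0) ∧
  (∀ (t : ℝ) (n : ℕ) (d : Fin n → ℤ) (x : Fin n → H), HomA V d x → V.inA (U t n d x)) ∧
  (∀ (n : ℕ), 1 ≤ n → ∀ (d : Fin n → ℤ) (x : Fin n → H), HomA V d x →
    ∀ t ∈ Set.Icc (0 : ℝ) 1,
      HasDerivWithinAt (fun s => U s n d x) (eqnRHS V (m t) (U t) n d x)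
        (Set.Icc (0 : ℝ) 1) t)

/-!
Induct on the arity `n`. Once `U` and `U'` agree in arities below `n`, only the one-block
composition distinguishes their flow equations, so `g = Uⁿ - U'ⁿ` satisfies
`g' = Sym (Π ∘ m_t ∘ g)`, where `Sym` is the graded symmetrization, idempotent because the Koszul
sign is a cocycle. Hence `Sym g` solves `λ' = Π m_t λ`, `λ₀ = 0`, so it vanishes; then
`g' = Π m_t (Sym g) = 0` and `g ≡ g(0) = 0`.
-/

section Koszul

variable {n : ℕ}

def sortPair (a b : Fin n) : Fin n × Fin n := if a < b then (a, b) else (b, a)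

lemma sortPair_fst_lt_snd (π : Equiv.Perm (Fin n)) {p : Fin n × Fin n} (hp : p.1 < p.2) :
    (sortPair (π p.1) (π p.2)).1 < (sortPair (π p.1) (π p.2)).2 := by
  have := π.injective.ne hp.ne
  unfold sortPair
  split_ifs <;> dsimp only <;> omega

lemma sortPair_inv_sortPair (π : Equiv.Perm (Fin n)) {p : Fin n × Fin n} (hp : p.1 < p.2) :
    sortPair (π⁻¹ (sortPair (π p.1) (π p.2)).1) (π⁻¹ (sortPair (π p.1) (π p.2)).2) = p := by
  unfold sortPair
  split_ifs <;> simp_all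
  omega

/-- `σ * τ` inverts a pair exactly when one of `τ` and `σ` (on its `τ`-image) does; since
`w` squares to `1`, this parity count becomes a product. -/
lemma prod_inversions_mul {M : Type*} [CommMonoid M] (w : Fin n → Fin n → M)
    (hw_symm : ∀ a b, w a b = w b a) (hw_sq : ∀ a b, w a b * w a b = 1)
    (σ τ : Equiv.Perm (Fin n)) :
    ∏ p ∈ Finset.univ.filter (fun p : Fin n × Fin n => p.1 < p.2),
        (if σ (τ p.2) < σ (τ p.1) then w (σ (τ p.1)) (σ (τ p.2)) else 1) =
      (∏ p ∈ Finset.univ.filter (fun p : Fin n × Fin n => p.1 < p.2),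
        if σ p.2 < σ p.1 then w (σ p.1) (σ p.2) else 1) *
      ∏ p ∈ Finset.univ.filter (fun p : Fin n × Fin n => p.1 < p.2),
        if τ p.2 < τ p.1 then w (σ (τ p.1)) (σ (τ p.2)) else 1 := by
  set S := Finset.univ.filter (fun p : Fin n × Fin n => p.1 < p.2)
  have hS : ∀ p, p ∈ S ↔ p.1 < p.2 := by simp [S]
  have hmaps : ∀ π : Equiv.Perm (Fin n), ∀ p ∈ S, sortPair (π p.1) (π p.2) ∈ S :=
    fun π p hp => (hS _).2 (sortPair_fst_lt_snd π ((hS p).1 hp))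
  have hreindex : ∏ q ∈ S, (if σ q.2 < σ q.1 then w (σ q.1) (σ q.2) else 1) =
      ∏ p ∈ S, if σ (sortPair (τ p.1) (τ p.2)).2 < σ (sortPair (τ p.1) (τ p.2)).1 then
        w (σ (sortPair (τ p.1) (τ p.2)).1) (σ (sortPair (τ p.1) (τ p.2)).2) else 1 :=
    (Finset.prod_nbij' (fun p => sortPair (τ p.1) (τ p.2))
      (fun p => sortPair (τ⁻¹ p.1) (τ⁻¹ p.2)) (hmaps τ) (hmaps τ⁻¹)
      (fun p hp => sortPair_inv_sortPair τ ((hS p).1 hp))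
      (fun p hp => by simpa using sortPair_inv_sortPair τ⁻¹ ((hS p).1 hp)) fun _ _ => rfl).symm
  rw [hreindex, ← Finset.prod_mul_distrib]
  refine Finset.prod_congr rfl fun p hp => ?_
  have hτ := τ.injective.ne ((hS p).1 hp).ne
  have hστ := σ.injective.ne hτ
  unfold sortPair
  rcases hτ.lt_or_gt with h | h
  · simp only [if_pos h, if_neg h.asymm, mul_one]
  · simp only [if_neg h.asymm, if_pos h]
    rcases hστ.lt_or_gt with h' | h'
    · simp only [if_neg h'.asymm, if_pos h', hw_symm (σ (τ p.2)), hw_sq]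
    · simp only [if_pos h', if_neg h'.asymm, one_mul]

lemma koszul_eq_prod_ite (σ : Equiv.Perm (Fin n)) (d : Fin n → ℤ) :
    koszul σ d = ∏ p ∈ Finset.univ.filter (fun p : Fin n × Fin n => p.1 < p.2),
      if σ p.2 < σ p.1 then (-1 : ℝ) ^ (d (σ p.1) * d (σ p.2)) else 1 := by
  rw [koszul, ← Finset.filter_filter, Finset.prod_filter]

lemma koszul_mul (σ τ : Equiv.Perm (Fin n)) (d : Fin n → ℤ) :
    koszul (σ * τ) d = koszul σ d * koszul τ (fun i => d (σ i)) := by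
  simp only [koszul_eq_prod_ite]
  refine prod_inversions_mul (fun a b => (-1 : ℝ) ^ (d a * d b)) (fun a b => by rw [mul_comm])
    (fun a b => ?_) σ τ
  rcases Int.even_or_odd (d a * d b) with h | h <;> simp [h.neg_one_zpow]

end Koszul

lemma HomA.comp {V : VAlg H} {n k : ℕ} {d : Fin n → ℤ} {x : Fin n → H} (hx : HomA V d x)
    (f : Fin k → Fin n) : HomA V (fun i => d (f i)) (fun i => x (f i)) :=
  ⟨fun i => hx.1 (f i), fun i => hx.2 (f i)⟩

/-- Graded symmetrization of an `n`-ary operation, normalized to be idempotent. -/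
noncomputable def koszulSymm {n : ℕ} (f : (Fin n → ℤ) → (Fin n → H) → H) (d : Fin n → ℤ)
    (x : Fin n → H) : H :=
  ∑ σ : Equiv.Perm (Fin n), (koszul σ d / n.factorial) • f (fun i => d (σ i)) (fun i => x (σ i))

section koszulSymm

variable {n : ℕ}

lemma koszulSymm_koszulSymm (f : (Fin n → ℤ) → (Fin n → H) → H) (d : Fin n → ℤ)
    (x : Fin n → H) : koszulSymm (koszulSymm f) d x = koszulSymm f d x := by
  have hfact : (n.factorial : ℝ) ≠ 0 := Nat.cast_ne_zero.2 n.factorial_ne_zero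
  have hinner : ∀ σ : Equiv.Perm (Fin n),
      (koszul σ d / n.factorial) • koszulSymm f (fun i => d (σ i)) (fun i => x (σ i)) =
        (n.factorial : ℝ)⁻¹ • koszulSymm f d x := by
    intro σ
    simp only [koszulSymm, Finset.smul_sum, smul_smul]
    refine Fintype.sum_equiv (Equiv.mulLeft σ) _ _ fun τ => ?_
    simp only [Equiv.coe_mulLeft, koszul_mul, Equiv.Perm.mul_apply]
    congr 1
    field_simp
  rw [koszulSymm, Finset.sum_congr rfl fun σ _ => hinner σ, Finset.sum_const, Finset.card_univ,
    Fintype.card_perm, Fintype.card_fin, ← Nat.cast_smul_eq_nsmul ℝ, smul_smul,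
    mul_inv_cancel₀ hfact, one_smul]

lemma map_koszulSymm (L : H →ₗ[ℝ] H) (f : (Fin n → ℤ) → (Fin n → H) → H) (d : Fin n → ℤ)
    (x : Fin n → H) : L (koszulSymm f d x) = koszulSymm (fun d' x' => L (f d' x')) d x := by
  simp only [koszulSymm, map_sum, map_smul]

end koszulSymm

lemma VAlg.D_one (V : VAlg H) (E : H →ₗ[ℝ] H) (P0 : H) (y : Fin 1 → H) :
    V.D E P0 1 y = V.proj (E (y 0)) := by
  simp [VAlg.D]

lemma eqnRHS_summand_single (V : VAlg H) (mt : H →ₗ[ℝ] H) {n : ℕ} (hn : 0 < n)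
    (d : Fin n → ℤ) (x : Fin n → H) (σ : Equiv.Perm (Fin n))
    (C : (k : ℕ) → (Fin k → ℤ) → (Fin k → H) → H) :
    (koszul σ d / (((Composition.single n hn).length.factorial : ℝ) *
        ∏ j : Fin (Composition.single n hn).length,
          (((Composition.single n hn).blocksFun j).factorial : ℝ))) •
      V.D mt 0 (Composition.single n hn).length (fun j => C ((Composition.single n hn).blocksFun j)
        (fun i => d (σ ((Composition.single n hn).embedding j i)))
        (fun i => x (σ ((Composition.single n hn).embedding j i)))) =
    (koszul σ d / n.factorial) • V.proj (mt (C n (fun i => d (σ i)) (fun i => x (σ i)))) := by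
  have hC : ∀ (k : ℕ) (e : Fin k → Fin n), k = n → (∀ i, (e i : ℕ) = i) →
      C k (fun i => d (σ (e i))) (fun i => x (σ (e i))) =
        C n (fun i => d (σ i)) (fun i => x (σ i)) := by
    rintro k e rfl he
    obtain rfl : e = id := funext fun i => Fin.ext (he i)
    rfl
  change (koszul σ d / ((Nat.factorial 1 : ℝ) *
      ∏ j : Fin 1, (((Composition.single n hn).blocksFun j).factorial : ℝ))) •
    V.D mt 0 1 (fun j : Fin 1 => C ((Composition.single n hn).blocksFun j)
      (fun i => d (σ ((Composition.single n hn).embedding j i)))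
      (fun i => x (σ ((Composition.single n hn).embedding j i)))) = _
  rw [VAlg.D_one, hC _ _ (Composition.single_blocksFun hn (0 : Fin 1))
      fun i => congrArg Fin.val (Composition.single_embedding hn i),
    Fin.prod_univ_one, Composition.single_blocksFun hn (0 : Fin 1), Nat.factorial_one, Nat.cast_one,
    one_mul]

/-- Only the one-block composition of `n` involves arity `n`. -/
lemma eqnRHS_sub_eqnRHS (V : VAlg H) (mt : H →ₗ[ℝ] H)
    (A B : (k : ℕ) → (Fin k → ℤ) → (Fin k → H) → H) {n : ℕ} (hn : 0 < n)
    {d : Fin n → ℤ} {x : Fin n → H} (hx : HomA V d x)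
    (hAB : ∀ l < n, ∀ (d' : Fin l → ℤ) (x' : Fin l → H), HomA V d' x' → A l d' x' = B l d' x') :
    eqnRHS V mt A n d x - eqnRHS V mt B n d x =
      koszulSymm (fun d' x' => V.proj (mt (A n d' x' - B n d' x'))) d x := by
  rw [eqnRHS, eqnRHS, ← Finset.sum_sub_distrib, koszulSymm]
  refine Finset.sum_congr rfl fun σ _ => ?_
  rw [← Finset.sum_sub_distrib, Finset.sum_eq_single (Composition.single n hn)]
  · rw [eqnRHS_summand_single, eqnRHS_summand_single, ← smul_sub, map_sub, map_sub]
  · intro c _ hc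
    have hlt := (Composition.ne_single_iff hn).1 hc
    have hblocks : (fun j => A (c.blocksFun j) (fun i => d (σ (c.embedding j i)))
        (fun i => x (σ (c.embedding j i)))) = fun j => B (c.blocksFun j)
          (fun i => d (σ (c.embedding j i))) (fun i => x (σ (c.embedding j i))) :=
      funext fun j => hAB _ (hlt j) _ _ (hx.comp (σ ∘ c.embedding j))
    rw [hblocks, sub_self]
  · exact fun h => (h (Finset.mem_univ _)).elim

section Flow

open Set

variable {E : Type} [NormedAddCommGroup E] [NormedSpace ℝ E]

lemma HasDerivWithinAt.koszulSymm {n : ℕ} {f : ℝ → (Fin n → ℤ) → (Fin n → E) → E}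
    {f' : (Fin n → ℤ) → (Fin n → E) → E} {s : Set ℝ} {t : ℝ} {d : Fin n → ℤ} {x : Fin n → E}
    (hf : ∀ σ : Equiv.Perm (Fin n), HasDerivWithinAt (fun r => f r (fun i => d (σ i))
      (fun i => x (σ i))) (f' (fun i => d (σ i)) (fun i => x (σ i))) s t) :
    HasDerivWithinAt (fun r => koszulSymm (f r) d x) (koszulSymm f' d x) s t :=
  HasDerivWithinAt.fun_sum fun σ _ => (hf σ).const_smul _

lemma eq_of_hasDerivWithinAt_zero_Icc {f : ℝ → E} {a b : ℝ}
    (hf : ∀ t ∈ Icc a b, HasDerivWithinAt f 0 (Icc a b) t) : ∀ t ∈ Icc a b, f t = f a :=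
  constant_of_has_deriv_right_zero (fun t ht => (hf t ht).continuousWithinAt) fun t ht =>
    (hf t (Ico_subset_Icc_self ht)).mono_of_mem_nhdsWithin (Icc_mem_nhdsGE_of_mem ht)

variable {V : VAlg E} {m : ℝ → E →ₗ[ℝ] E} {U U' : ℝ → (n : ℕ) → (Fin n → ℤ) → (Fin n → E) → E}

lemma IsAnalyticSol.proj_apply (hU : IsAnalyticSol V m U) (t : ℝ) {n : ℕ} {d : Fin n → ℤ}
    {x : Fin n → E} (hx : HomA V d x) : V.proj (U t n d x) = U t n d x :=
  hU.2.1 t n d x hx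

lemma IsAnalyticSol.hasDerivWithinAt_sub (hU : IsAnalyticSol V m U)
    (hU' : IsAnalyticSol V m U') {n : ℕ} (hn : 0 < n)
    (hlt : ∀ l < n, ∀ t ∈ Icc (0 : ℝ) 1, ∀ (d : Fin l → ℤ) (x : Fin l → E), HomA V d x →
      U t l d x = U' t l d x)
    ⦃d : Fin n → ℤ⦄ ⦃x : Fin n → E⦄ (hx : HomA V d x) ⦃t : ℝ⦄ (ht : t ∈ Icc (0 : ℝ) 1) :
    HasDerivWithinAt (fun s => U s n d x - U' s n d x)
      (koszulSymm (fun d' x' => V.proj (m t (U t n d' x' - U' t n d' x'))) d x) (Icc 0 1) t := by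
  rw [← eqnRHS_sub_eqnRHS V (m t) _ _ hn hx fun l hl d' x' h' => hlt l hl t ht d' x' h']
  exact (hU.2.2 n hn d x hx t ht).sub (hU'.2.2 n hn d x hx t ht)

lemma IsAnalyticSol.eq_of_forall_lt (hU : IsAnalyticSol V m U) (hU' : IsAnalyticSol V m U')
    (huniq : ∀ c : ℝ → E, (∀ t ∈ Icc (0 : ℝ) 1, V.inA (c t)) →
      (∀ t ∈ Icc (0 : ℝ) 1, HasDerivWithinAt c (V.proj (m t (c t))) (Icc (0 : ℝ) 1) t) →
      c 0 = 0 → ∀ t ∈ Icc (0 : ℝ) 1, c t = 0)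
    {n : ℕ} (hn : 0 < n)
    (hinit : ∀ (d : Fin n → ℤ) (x : Fin n → E), HomA V d x → U 0 n d x = U' 0 n d x)
    (hlt : ∀ l < n, ∀ t ∈ Icc (0 : ℝ) 1, ∀ (d : Fin l → ℤ) (x : Fin l → E), HomA V d x →
      U t l d x = U' t l d x)
    {d : Fin n → ℤ} {x : Fin n → E} (hx : HomA V d x) :
    ∀ t ∈ Icc (0 : ℝ) 1, U t n d x = U' t n d x := by
  have hg := hU.hasDerivWithinAt_sub hU' hn hlt
  have hc : ∀ t ∈ Icc (0 : ℝ) 1,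
      koszulSymm (fun d' x' => U t n d' x' - U' t n d' x') d x = 0 := by
    refine huniq _ (fun t _ => ?_) (fun t ht => ?_) ?_
    · rw [VAlg.inA, map_koszulSymm]
      refine Finset.sum_congr rfl fun σ _ => ?_
      simp only [map_sub, hU.proj_apply _ (hx.comp σ), hU'.proj_apply _ (hx.comp σ)]
    · have := HasDerivWithinAt.koszulSymm (f := fun s d' x' => U s n d' x' - U' s n d' x')
        fun σ => hg (hx.comp σ) ht
      rwa [koszulSymm_koszulSymm, ← map_koszulSymm, ← map_koszulSymm] at this
    · exact Finset.sum_eq_zero fun σ _ => by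
        simp only [hinit _ _ (hx.comp σ), sub_self, smul_zero]
  have hconst := eq_of_hasDerivWithinAt_zero_Icc fun t ht => by
    simpa only [← map_koszulSymm, hc t ht, map_zero] using hg hx ht
  intro t ht
  rw [← sub_eq_zero]
  exact (hconst t ht).trans (sub_eq_zero.2 (hinit d x hx))

end Flow

theorem analytic_flow_system_uniqueness_general
    (H : Type) [NormedAddCommGroup H] [NormedSpace ℝ H] (V : VAlg H)
    (m : ℝ → H →ₗ[ℝ] H)
    (huniq : ∀ c : ℝ → H,
        (∀ t ∈ Set.Icc (0 : ℝ) 1, V.inA (c t)) →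
        (∀ t ∈ Set.Icc (0 : ℝ) 1,
          HasDerivWithinAt c (V.proj (m t (c t))) (Set.Icc (0 : ℝ) 1) t) →
        c 0 = 0 → ∀ t ∈ Set.Icc (0 : ℝ) 1, c t = 0)
    (U U' : ℝ → (n : ℕ) → (Fin n → ℤ) → (Fin n → H) → H)
    (hU : IsAnalyticSol V m U) (hU' : IsAnalyticSol V m U')
    (hinit : ∀ (n : ℕ) (d : Fin n → ℤ) (x : Fin n → H), HomA V d x →
      U 0 n d x = U' 0 n d x) :
    ∀ t ∈ Set.Icc (0 : ℝ) 1, ∀ (n : ℕ) (d : Fin n → ℤ) (x : Fin n → H), HomA V d x →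
      U t n d x = U' t n d x := by
  intro t ht n
  induction n using Nat.strong_induction_on generalizing t with
  | _ n ih =>
    intro d x hx
    rcases Nat.eq_zero_or_pos n with rfl | hn
    · rw [hU.1, hU'.1]
    · exact hU.eq_of_forall_lt hU' huniq hn (hinit n) ih hx t ht

/-- Under the uniqueness assumption for the Cauchy problem
`d/dt λ = Π∘m_t∘λ, λ₀ = 0`, any two solutions of the flow system on `[0,1]` with `U⁰ = 0`
and the same initial values at `t = 0` coincide. -/
theorem analytic_flow_system_uniqueness
    (H : Type) [NormedAddCommGroup H] [NormedSpace ℝ H] (V : VAlg H)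
    (m : ℝ → H →ₗ[ℝ] H)
    (hder : ∀ t ∈ Set.Icc (0 : ℝ) 1, IsDer V.toGLA 0 (m t))
    (hproj : ∀ t ∈ Set.Icc (0 : ℝ) 1, ∀ x : H, V.proj (m t (V.proj x)) = V.proj (m t x))
    (huniq : ∀ c : ℝ → H,
        (∀ t ∈ Set.Icc (0 : ℝ) 1, V.inA (c t)) →
        (∀ t ∈ Set.Icc (0 : ℝ) 1,
          HasDerivWithinAt c (V.proj (m t (c t))) (Set.Icc (0 : ℝ) 1) t) →
        c 0 = 0 → ∀ t ∈ Set.Icc (0 : ℝ) 1, c t = 0)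
    (U U' : ℝ → (n : ℕ) → (Fin n → ℤ) → (Fin n → H) → H)
    (hU : IsAnalyticSol V m U) (hU' : IsAnalyticSol V m U')
    (hinit : ∀ (n : ℕ) (d : Fin n → ℤ) (x : Fin n → H), HomA V d x →
      U 0 n d x = U' 0 n d x) :
    ∀ t ∈ Set.Icc (0 : ℝ) 1, ∀ (n : ℕ) (d : Fin n → ℤ) (x : Fin n → H), HomA V d x →
      U t n d x = U' t n d x :=
  analytic_flow_system_uniqueness_general H V m huniq U U' hU hU' hinit
end
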